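/- For integers 0 ≤ m ≤ n, m is an ancestor of n (i.e., m ∈ 𝒜(n), equivalently mrca(m,n) = m) if and only if L(n−m)∘ϑ^m = 0, i.e., if and only if S(m) = min_{m ≤ j ≤ n} S(j). -/

import Mathlib

/-! Reversing time at `n` turns `S` into the dual walk `S ∘ ϑ^n (j) = S(n) − S(n − j)`, and the
weak ascending ladder times of a walk are exactly its weak records: each ladder time
is the first time after the previous one at which the walk regains the previous record level.
Hence `m ∈ 𝒜(n)` iff `n − m` is a weak record of the dual walk, i.e. iff `S(m) ≤ S(j)` for
`m ≤ j ≤ n`. Since `S ∘ ϑ^m (−k) = S(m) − S(m + k)`, the same condition says `L(n − m) ∘ ϑ^m = 0`. -/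

open scoped Classical NNReal
noncomputable section

/-- Finite point measures on `(0,∞)`, modeled as multisets of atoms in `ℝ≥0`. -/
abbrev PtM := Multiset ℝ≥0

/-- A stick: a life-length together with a finite point measure of birth times. -/
abbrev Stick := ℝ≥0 × PtM

/-- The space of doubly infinite sequences of sticks. -/
abbrev Om := ℤ → Stick

/-- The shift operator `θ_n`. -/
def theta (n : ℤ) (ω : Om) : Om := fun k => ω (n + k)

/-- The dual (time-reversal) operator `ϑ^n`. -/
def dual (n : ℤ) (ω : Om) : Om := fun k => ω (n - k - 1)

/-- Life length of the `k`-th individual. -/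
def Vc (ω : Om) (k : ℤ) : ℝ≥0 := (ω k).1

/-- Point measure (ages at childbearing) of the `k`-th individual. -/
def Pc (ω : Om) (k : ℤ) : PtM := (ω k).2

/-- The Lukasiewicz path `S`. -/
def Sw (ω : Om) (n : ℤ) : ℤ :=
  if 0 ≤ n then ∑ k ∈ Finset.range n.toNat, ((Multiset.card (Pc ω (k : ℤ)) : ℤ) - 1)
  else - ∑ k ∈ Finset.range (-n).toNat, ((Multiset.card (Pc ω (-(k : ℤ) - 1)) : ℤ) - 1)

/-- `π(ν)`: the supremum of the support (largest atom) of a finite point measure. -/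
def piM (ν : PtM) : ℝ≥0 := ν.sup

/-- `Υ_j(ν)`: removes the `j` largest atoms of `ν`. -/
def upsilon (j : ℕ) (ν : PtM) : PtM :=
  ((ν.sort (· ≤ ·)).take (Multiset.card ν - j) : List ℝ≥0)

/-- The map `Φ` driving the spine process dynamics. -/
def phiSp (Y : List PtM) (ν : PtM) : List PtM :=
  if ν = 0 then
    match Y.reverse.dropWhile (fun m => decide (Multiset.card m < 2)) with
    | [] => []
    | h :: t => (upsilon 1 h :: t).reverse
  else Y ++ [ν]

/-- The spine process `𝕊₀ⁿ`. -/
def spine (ω : Om) : ℕ → List PtM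
  | 0 => []
  | n + 1 => phiSp (spine ω n) (Pc ω (n : ℤ))

/-- `π` extended to finite sequences of point measures. -/
def piL (Y : List PtM) : ℝ≥0 := (Y.map piM).sum

/-- The chronological height process `ℍ(n) = π(𝕊₀ⁿ)`. -/
def Hchr (ω : Om) (n : ℕ) : ℝ≥0 := piL (spine ω n)

/-- The genealogical height process
`𝓗(n) = #{k ∈ {0,…,n−1} : S(k+1) ≤ min_{k+1 ≤ j ≤ n} S(j)}`. -/
def genH (ω : Om) (n : ℕ) : ℕ :=
  ((Finset.range n).filter
    (fun k : ℕ => ∀ j : ℕ, j ∈ Finset.Icc (k + 1) n → Sw ω ((k : ℤ) + 1) ≤ Sw ω (j : ℤ))).card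

/-- Weak ascending ladder height times `T(k)` (valued `⊤` if nonexistent). -/
def ladderT (ω : Om) : ℕ → ℕ∞
  | 0 => 0
  | k + 1 => sInf {x : ℕ∞ | ∃ m j : ℕ, x = (m : ℕ∞) ∧ ladderT ω k = (j : ℕ∞) ∧
      j < m ∧ Sw ω (j : ℤ) ≤ Sw ω (m : ℤ)}

/-- `T^{-1}(n) = min{k ≥ 0 : T(k) ≥ n}`. -/
def Tinv (ω : Om) (n : ℕ) : ℕ := sInf {k : ℕ | (n : ℕ∞) ≤ ladderT ω k}

/-- `T̃^{-1}(n) = max{k ≥ 0 : T(k) ≤ n}`. -/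
def tildeTinv (ω : Om) (n : ℕ) : ℕ := sSup {k : ℕ | ladderT ω k ≤ (n : ℕ∞)}

/-- First passage time upward `τ_ℓ = inf{k > 0 : S(k) ≥ ℓ}`. -/
def tauUp (ω : Om) (ℓ : ℤ) : ℕ∞ :=
  sInf {x : ℕ∞ | ∃ k : ℕ, x = (k : ℕ∞) ∧ 0 < k ∧ ℓ ≤ Sw ω (k : ℤ)}

/-- First hitting time downward `τ⁻_ℓ = inf{k ≥ 0 : S(k) = −ℓ}`. -/
def tauDown (ω : Om) (ℓ : ℤ) : ℕ∞ :=
  sInf {x : ℕ∞ | ∃ k : ℕ, x = (k : ℕ∞) ∧ Sw ω (k : ℤ) = -ℓ}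

/-- `τ_ℓ` as a natural number (junk value `0` when infinite). -/
def tauUpN (ω : Om) (ℓ : ℤ) : ℕ := (tauUp ω ℓ).toNat

/-- The undershoot `ζ_ℓ = ℓ − S(τ_ℓ − 1)`. -/
def zetaU (ω : Om) (ℓ : ℤ) : ℤ := ℓ - Sw ω ((tauUpN ω ℓ : ℤ) - 1)

/-- `μ_ℓ = Υ_{ζ_ℓ}(𝒫_{τ_ℓ − 1})`. -/
def muU (ω : Om) (ℓ : ℤ) : PtM := upsilon (zetaU ω ℓ).toNat (Pc ω ((tauUpN ω ℓ : ℤ) - 1))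

/-- `𝒬(k) = μ₀ ∘ θ_{T(k−1)}`. -/
def Qcal (ω : Om) (k : ℕ) : PtM := muU (theta ((ladderT ω (k - 1)).toNat : ℤ) ω) 0

/-- `𝕐(k) = π(𝒬(k))`. -/
def Ybb (ω : Om) (k : ℕ) : ℝ≥0 := piM (Qcal ω k)

/-- The backward maximum `L(m) = max_{0 ≤ k ≤ m} S(−k)`. -/
def Lmax (ω : Om) (m : ℕ) : ℤ :=
  Finset.sup' (Finset.range (m + 1)) Finset.nonempty_range_add_one (fun k => Sw ω (-(k : ℤ)))

/-- The ancestor set `𝒜(n) = {n − T(k)∘ϑ^n : k ≥ 0}` (only finite ladder times). -/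
def Aset (ω : Om) (n : ℕ) : Set ℤ :=
  {a | ∃ k j : ℕ, ladderT (dual (n : ℤ) ω) k = (j : ℕ∞) ∧ a = (n : ℤ) - (j : ℤ)}

/-- `mrca(m,n) = max(𝒜(m) ∩ 𝒜(n))`. -/
def mrcaZ (ω : Om) (m n : ℕ) : ℤ := sSup (Aset ω m ∩ Aset ω n)

/-- `χ(m,k) = inf{j ≥ m+1 : S(j) = S(m+1) − k}`. -/
def chiT (ω : Om) (m k : ℕ) : ℕ∞ :=
  sInf {x : ℕ∞ | ∃ j : ℕ, x = (j : ℕ∞) ∧ m + 1 ≤ j ∧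
    Sw ω (j : ℤ) = Sw ω ((m : ℤ) + 1) - (k : ℤ)}

/-- `χ(m) = inf{j ≥ m+1 : S(j) = S(m) − 1}`. -/
def chiF (ω : Om) (m : ℕ) : ℕ∞ :=
  sInf {x : ℕ∞ | ∃ j : ℕ, x = (j : ℕ∞) ∧ m + 1 ≤ j ∧ Sw ω (j : ℤ) = Sw ω (m : ℤ) - 1}

/-- The functional `D_ℓ(𝕊₀^m)` of the spine, expressed through the dual walk:
`D_ℓ = (Σ_{i : 0 < T(i) ≤ min(τ_ℓ, m)} 𝕐(i) − 1_{τ_ℓ ≤ m} π(μ_ℓ)) ∘ ϑ^m`, with `D_0 ≡ 0`. -/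
def Dfun (ω : Om) (m : ℕ) (ℓ : ℤ) : ℝ :=
  if ℓ < 1 then 0 else
    (∑ i ∈ (Finset.Icc 1 m).filter
        (fun i => 0 < ladderT (dual (m : ℤ) ω) i ∧
          ladderT (dual (m : ℤ) ω) i ≤ min (tauUp (dual (m : ℤ) ω) ℓ) (m : ℕ∞)),
      (Ybb (dual (m : ℤ) ω) i : ℝ))
    - (if tauUp (dual (m : ℤ) ω) ℓ ≤ (m : ℕ∞) then (piM (muU (dual (m : ℤ) ω) ℓ) : ℝ) else 0)

/-- `K_j = 2𝒱(j−1) − ℍ(j)`. -/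
def Kt (ω : Om) (j : ℕ) : ℝ := 2 * ∑ k ∈ Finset.range j, (Vc ω (k : ℤ) : ℝ) - (Hchr ω j : ℝ)

/-- The chronological contour process: on `[K_n, K_{n+1}]` it increases at rate `+1` from
`ℍ(n)` up to `ℍ(n) + V_n` and then decreases at rate `−1` down to `ℍ(n+1)`. -/
def contour (ω : Om) (t : ℝ) : ℝ :=
  let n := sSup {j : ℕ | Kt ω j ≤ t}
  min ((Hchr ω n : ℝ) + (t - Kt ω n)) ((Hchr ω (n + 1) : ℝ) + (Kt ω (n + 1) - t))

lemma Sw_zero (ω : Om) : Sw ω 0 = 0 := by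
  simp [Sw]

lemma Sw_natCast (ω : Om) (p : ℕ) :
    Sw ω p = ∑ k ∈ Finset.range p, ((Multiset.card (Pc ω k) : ℤ) - 1) := by
  simp [Sw]

lemma Sw_neg_natCast (ω : Om) (p : ℕ) :
    Sw ω (-p) = -∑ k ∈ Finset.range p, ((Multiset.card (Pc ω (-(k : ℤ) - 1)) : ℤ) - 1) := by
  rcases p.eq_zero_or_pos with rfl | hp
  · simp [Sw]
  · simp [Sw, hp.ne']

lemma Sw_succ (ω : Om) (a : ℤ) :
    Sw ω (a + 1) = Sw ω a + ((Multiset.card (Pc ω a) : ℤ) - 1) := by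
  obtain ⟨p, rfl | rfl⟩ := Int.eq_nat_or_neg a
  · rw [← Nat.cast_succ, Sw_natCast, Sw_natCast, Finset.sum_range_succ]
  · cases p with
    | zero => simp [Sw]
    | succ p =>
      rw [show -((p + 1 : ℕ) : ℤ) + 1 = -(p : ℤ) by push_cast; ring, Sw_neg_natCast,
        Sw_neg_natCast, Finset.sum_range_succ]
      push_cast
      ring_nf

lemma eq_Sw_of_succ (ω : Om) (f : ℤ → ℤ) (h0 : f 0 = 0)
    (hsucc : ∀ a, f (a + 1) = f a + ((Multiset.card (Pc ω a) : ℤ) - 1)) : f = Sw ω := by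
  funext a
  induction a using Int.induction_on with
  | zero => rw [h0, Sw_zero]
  | succ i ih => rw [hsucc, Sw_succ, ih]
  | pred i ih =>
    have hf := hsucc (-(i : ℤ) - 1)
    have hS := Sw_succ ω (-(i : ℤ) - 1)
    simp only [sub_add_cancel] at hf hS
    linarith

lemma Sw_dual (ω : Om) (n j : ℤ) : Sw (dual n ω) j = Sw ω n - Sw ω (n - j) := by
  refine (congrFun (eq_Sw_of_succ (dual n ω) (fun j => Sw ω n - Sw ω (n - j)) ?_ ?_) j).symm
  · simp only [sub_zero, sub_self]
  · intro a
    have h := Sw_succ ω (n - a - 1)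
    simp only [sub_add_cancel] at h
    rw [show Pc (dual n ω) a = Pc ω (n - a - 1) from rfl, show n - (a + 1) = n - a - 1 by ring]
    linarith

def IsWeakRecord (ω : Om) (j : ℕ) : Prop := ∀ i ≤ j, Sw ω i ≤ Sw ω j

lemma ladderT_succ_eq_natCast_iff (ω : Om) (k j : ℕ) :
    ladderT ω (k + 1) = j ↔ ∃ i : ℕ, ladderT ω k = i ∧ i < j ∧ Sw ω i ≤ Sw ω j ∧
      ∀ l : ℕ, i < l → l < j → Sw ω l < Sw ω i := by
  set X := {x : ℕ∞ | ∃ m i : ℕ, x = m ∧ ladderT ω k = i ∧ i < m ∧ Sw ω i ≤ Sw ω m}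
  change sInf X = j ↔ _
  constructor
  · intro h
    have hne : X.Nonempty := Set.nonempty_iff_ne_empty.2 fun he => by
      rw [he, sInf_empty] at h
      exact ENat.top_ne_natCast j h
    obtain ⟨m, i, hjm, hi, him, hle⟩ := h ▸ csInf_mem hne
    obtain rfl : j = m := by exact_mod_cast hjm
    refine ⟨i, hi, him, hle, fun l hil hlj => lt_of_not_ge fun hl => hlj.not_ge ?_⟩
    exact_mod_cast h ▸ sInf_le (show (l : ℕ∞) ∈ X from ⟨l, i, rfl, hi, hil, hl⟩)
  · rintro ⟨i, hi, hij, hle, hmin⟩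
    refine IsLeast.csInf_eq ⟨⟨j, i, rfl, hi, hij, hle⟩, ?_⟩
    rintro _ ⟨l, i', rfl, hi', hi'l, hle'⟩
    obtain rfl : i' = i := by exact_mod_cast hi'.symm.trans hi
    by_contra! hlj
    exact (hmin l hi'l (by exact_mod_cast hlj)).not_ge hle'

lemma IsWeakRecord.of_first_exceedance {ω : Om} {i j : ℕ} (hi : IsWeakRecord ω i) (hij : i < j)
    (hle : Sw ω i ≤ Sw ω j) (hmin : ∀ l : ℕ, i < l → l < j → Sw ω l < Sw ω i) :
    IsWeakRecord ω j := by
  intro l hl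
  rcases le_or_gt l i with hli | hil
  · exact (hi l hli).trans hle
  rcases hl.lt_or_eq with hlj | rfl
  · exact (hmin l hil hlj).le.trans hle
  · exact le_rfl

lemma isWeakRecord_of_ladderT_eq (ω : Om) {k j : ℕ} (h : ladderT ω k = j) : IsWeakRecord ω j := by
  induction k generalizing j with
  | zero =>
    obtain rfl : j = 0 := by simpa [ladderT, eq_comm] using h
    intro i hi
    rw [Nat.le_zero.1 hi]
  | succ k ih =>
    obtain ⟨i, hi, hij, hle, hmin⟩ := (ladderT_succ_eq_natCast_iff ω k j).1 h
    exact (ih hi).of_first_exceedance hij hle hmin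

lemma exists_ladderT_eq_of_isWeakRecord (ω : Om) {j : ℕ} (hj : IsWeakRecord ω j) :
    ∃ k, ladderT ω k = j := by
  induction j using Nat.strong_induction_on with
  | _ j ih =>
  rcases j.eq_zero_or_pos with rfl | hjpos
  · exact ⟨0, rfl⟩
  have hrec0 : IsWeakRecord ω 0 := fun i hi => by rw [Nat.le_zero.1 hi]
  -- `i` is the last record before `j`; then `j` is the first time after `i` that `S` regains `S i`.
  set i := Nat.findGreatest (IsWeakRecord ω) (j - 1)
  have hi : IsWeakRecord ω i := Nat.findGreatest_spec (Nat.zero_le _) hrec0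
  have hij : i < j := by have := Nat.findGreatest_le (P := IsWeakRecord ω) (j - 1); omega
  have hmin : ∀ l : ℕ, i < l → l < j → Sw ω l < Sw ω i := by
    by_contra! hex
    have hl := Nat.find_spec hex
    have hrec : IsWeakRecord ω (Nat.find hex) := hi.of_first_exceedance hl.1 hl.2.2
      fun l hil hll => lt_of_not_ge fun h => Nat.find_min hex hll ⟨hil, hl.2.1.trans' hll, h⟩
    exact hl.1.not_ge (Nat.le_findGreatest (by omega) hrec)
  obtain ⟨k, hk⟩ := ih i hij hi
  exact ⟨k + 1, (ladderT_succ_eq_natCast_iff ω k j).2 ⟨i, hk, hij, hj i hij.le, hmin⟩⟩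

lemma exists_ladderT_eq_iff (ω : Om) (j : ℕ) : (∃ k, ladderT ω k = j) ↔ IsWeakRecord ω j :=
  ⟨fun ⟨_, hk⟩ => isWeakRecord_of_ladderT_eq ω hk, exists_ladderT_eq_of_isWeakRecord ω⟩

lemma mem_Aset_iff (ω : Om) {m n : ℕ} (hmn : m ≤ n) :
    (m : ℤ) ∈ Aset ω n ↔ IsWeakRecord (dual n ω) (n - m) := by
  rw [← exists_ladderT_eq_iff]
  constructor
  · rintro ⟨k, j, hk, hj⟩
    exact ⟨k, by rwa [show n - m = j by omega]⟩
  · rintro ⟨k, hk⟩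
    exact ⟨k, n - m, hk, by omega⟩

lemma isWeakRecord_dual_iff (ω : Om) {m n : ℕ} (hmn : m ≤ n) :
    IsWeakRecord (dual n ω) (n - m) ↔ ∀ j ∈ Finset.Icc m n, Sw ω m ≤ Sw ω j := by
  simp only [IsWeakRecord, Sw_dual, Finset.mem_Icc, Nat.cast_sub hmn, sub_sub_cancel,
    sub_le_sub_iff_left]
  constructor
  · intro h j ⟨hmj, hjn⟩
    simpa [Nat.cast_sub hjn] using h (n - j) (by omega)
  · intro h i hi
    simpa [Nat.cast_sub (hi.trans (Nat.sub_le n m))] using h (n - i) ⟨by omega, by omega⟩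

lemma Lmax_eq_zero_iff (ω : Om) (d : ℕ) : Lmax ω d = 0 ↔ ∀ k ≤ d, Sw ω (-k) ≤ 0 := by
  have h0 : 0 ≤ Lmax ω d := by
    unfold Lmax
    have := Finset.le_sup' (fun k : ℕ => Sw ω (-(k : ℤ))) (show 0 ∈ Finset.range (d + 1) by simp)
    simpa only [Nat.cast_zero, neg_zero, Sw_zero] using this
  rw [le_antisymm_iff, and_iff_left h0, Lmax, Finset.sup'_le_iff]
  simp only [Finset.mem_range, Nat.lt_succ_iff]

lemma Lmax_dual_eq_zero_iff (ω : Om) {m n : ℕ} (hmn : m ≤ n) :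
    Lmax (dual m ω) (n - m) = 0 ↔ ∀ j ∈ Finset.Icc m n, Sw ω m ≤ Sw ω j := by
  simp only [Lmax_eq_zero_iff, Sw_dual, sub_neg_eq_add, sub_nonpos, Finset.mem_Icc]
  constructor
  · intro h j ⟨hmj, hjn⟩
    simpa [Nat.cast_sub hmj] using h (j - m) (by omega)
  · intro h k hk
    exact_mod_cast h (m + k) ⟨by omega, by omega⟩

lemma Finset.apply_eq_inf'_iff {α β : Type*} [SemilatticeInf β] {s : Finset α} (H : s.Nonempty)
    (f : α → β) {a : α} (ha : a ∈ s) : f a = s.inf' H f ↔ ∀ b ∈ s, f a ≤ f b :=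
  ⟨fun h _ hb => h ▸ Finset.inf'_le f hb,
    fun h => le_antisymm (Finset.le_inf' H f h) (Finset.inf'_le f ha)⟩

theorem stmt7 (ω : Om) (m n : ℕ) (hmn : m ≤ n) :
    (((m : ℤ) ∈ Aset ω n) ↔ Lmax (dual (m : ℤ) ω) (n - m) = 0) ∧
    (Lmax (dual (m : ℤ) ω) (n - m) = 0 ↔
      Sw ω (m : ℤ)
        = Finset.inf' (Finset.Icc m n) (Finset.nonempty_Icc.2 hmn) (fun j => Sw ω (j : ℤ))) := by
  have hA := (mem_Aset_iff ω hmn).trans (isWeakRecord_dual_iff ω hmn)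
  have hL := Lmax_dual_eq_zero_iff ω hmn
  have hI := Finset.apply_eq_inf'_iff (Finset.nonempty_Icc.2 hmn) (fun j : ℕ => Sw ω j)
    (Finset.left_mem_Icc.2 hmn)
  exact ⟨hA.trans hL.symm, hL.trans hI.symm⟩

end
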